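/- The map F restricted to Ω' = Ω ∩ {y ∈ ℝ^n : Σ_{i=1}^n F_i(y) < 1} is a bijection from Ω' onto the open simplex Δ_n = {x ∈ ℝ^n : x_i > 0 for all i and Σ_{i=1}^n x_i < 1}; equivalently, F^{-1}(Δ_n) ∩ Ω = Ω'. -/

import Mathlib

/-- The hypotheses on the function `q`. -/
def qCond (q : ℕ → ℕ) : Prop :=
  q 0 = 1 ∧ (∀ a b, q a + q b < q (max a b + 1)) ∧ ∀ a, 3 * q a ≤ q (a + 1)

/-- The affine form `f_S(y) = −q(|S|) + Σ_{i∈S} y_i`. -/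
def fS (n : ℕ) (q : ℕ → ℕ) (S : Finset (Fin n)) (y : Fin n → ℝ) : ℝ :=
  -(q S.card : ℝ) + ∑ i ∈ S, y i

/-- The region `Ω = ∩_{∅≠S⊆{1,…,n}} {f_S > 0}`. -/
def Omega (n : ℕ) (q : ℕ → ℕ) : Set (Fin n → ℝ) :=
  {y | ∀ S : Finset (Fin n), S.Nonempty → 0 < fS n q S y}

/-- The map `F : ℝ^n → ℝ^n`, `F_i = ∏_{S ∋ i} f_S`. -/
def Fmap (n : ℕ) (q : ℕ → ℕ) (y : Fin n → ℝ) : Fin n → ℝ := fun i =>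
  ∏ S ∈ Finset.univ.filter (fun S : Finset (Fin n) => i ∈ S), fS n q S y

/-- The region `Ω' = Ω ∩ {Σ_i F_i < 1}`. -/
def Omega' (n : ℕ) (q : ℕ → ℕ) : Set (Fin n → ℝ) :=
  Omega n q ∩ {y | ∑ i, Fmap n q y i < 1}

/-- The open simplex `Δ_n = {x : x_i > 0, Σ x_i < 1}`. -/
def simplex' (n : ℕ) : Set (Fin n → ℝ) :=
  {x | (∀ i, 0 < x i) ∧ ∑ i, x i < 1}


/-!
If `F y = F z` for `y, z ∈ Ω`, then by double counting
`0 = ∑ᵢ (log Fᵢ y - log Fᵢ z)(yᵢ - zᵢ) = ∑_S (log f_S y - log f_S z)(f_S y - f_S z)`,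
a sum of nonnegative terms, the one for `S = {i}` being positive when `yᵢ ≠ zᵢ`; so `F` is
injective on `Ω`.

For surjectivity onto the positive orthant, let `c = log x` and minimise the convex potential
`Ψ(y) = ∑_{S ≠ ∅} φ(f_S y) - ⟨c, y⟩`, `φ(t) = t log t - t`, over the closure `Ω̄` of `Ω`; it is
coercive there, so a minimiser exists. As `φ(t b) = t φ(b) + t b log t`, moving from a boundary
point of `Ω` towards a point of `Ω` decreases `Ψ` at the rate `log t → -∞`, so the minimiser lies in
`Ω`. There `φ' = log` gives `∂ᵢΨ = ∑_{S ∋ i} log f_S - cᵢ = log Fᵢ - cᵢ`, which must vanish.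
-/

open Finset Filter Topology

noncomputable def phi (t : ℝ) : ℝ := t * Real.log t - t

lemma continuous_phi : Continuous phi := Real.continuous_mul_log.sub continuous_id

lemma hasDerivAt_phi {x : ℝ} (hx : x ≠ 0) : HasDerivAt phi (Real.log x) x := by
  have h := (Real.hasDerivAt_mul_log hx).fun_sub (hasDerivAt_id' x)
  rwa [add_sub_cancel_right] at h

lemma convexOn_phi : ConvexOn ℝ (Set.Ici 0) phi :=
  Real.convexOn_mul_log.sub (concaveOn_id (convex_Ici 0))

lemma phi_add_mul_sub_le {a b t : ℝ} (ha : 0 ≤ a) (hb : 0 ≤ b) (ht₀ : 0 ≤ t) (ht₁ : t ≤ 1) :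
    phi (a + t * (b - a)) ≤ phi a + t * (phi b - phi a) := by
  have h := convexOn_phi.2 (Set.mem_Ici.2 ha) (Set.mem_Ici.2 hb) (sub_nonneg.2 ht₁) ht₀
    (sub_add_cancel 1 t)
  simp only [smul_eq_mul] at h
  rw [show a + t * (b - a) = (1 - t) * a + t * b by ring]
  linarith

lemma phi_mul (t b : ℝ) : phi (t * b) = t * phi b + t * b * Real.log t := by
  rcases eq_or_ne t 0 with rfl | ht
  · simp [phi]
  rcases eq_or_ne b 0 with rfl | hb
  · simp [phi]
  rw [phi, phi, Real.log_mul ht hb]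
  ring

lemma neg_one_le_phi {t : ℝ} (ht : 0 ≤ t) : -1 ≤ phi t := by
  rcases ht.eq_or_lt with rfl | ht
  · simp [phi]
  have hlog := Real.one_sub_inv_le_log_of_pos ht
  have : t * (1 - t⁻¹) = t - 1 := by field_simp
  unfold phi
  nlinarith

lemma tendsto_phi_sub_mul_atTop (C : ℝ) : Tendsto (fun u => phi u - C * u) atTop atTop := by
  refine (tendsto_id.atTop_mul_atTop₀
    (tendsto_atTop_add_const_right atTop (-(1 + C)) Real.tendsto_log_atTop)).congr fun u => ?_
  simp only [phi, id]
  ring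

lemma log_sub_log_mul_sub_pos {x y : ℝ} (hx : 0 < x) (hy : 0 < y) (hxy : x ≠ y) :
    0 < (Real.log x - Real.log y) * (x - y) := by
  rcases hxy.lt_or_gt with h | h
  · exact mul_pos_of_neg_of_neg (sub_neg.2 (Real.log_lt_log hx h)) (sub_neg.2 h)
  · exact mul_pos (sub_pos.2 (Real.log_lt_log hy h)) (sub_pos.2 h)

lemma sum_sum_filter_mem_mul {ι : Type*} [Fintype ι] [DecidableEq ι] (g : Finset ι → ℝ)
    (w : ι → ℝ) :
    ∑ i, (∑ S ∈ univ.filter (i ∈ ·), g S) * w i = ∑ S, g S * ∑ i ∈ S, w i := by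
  simp_rw [sum_mul, mul_sum]
  exact sum_comm' (by simp)

section
variable {n : ℕ} {q : ℕ → ℕ}

lemma continuous_fS (S : Finset (Fin n)) : Continuous (fS n q S) :=
  continuous_const.add (continuous_finsetSum S fun i _ => continuous_apply i)

lemma fS_add_smul (S : Finset (Fin n)) (y v : Fin n → ℝ) (t : ℝ) :
    fS n q S (y + t • v) = fS n q S y + t * ∑ i ∈ S, v i := by
  simp only [fS, Pi.add_apply, Pi.smul_apply, smul_eq_mul, sum_add_distrib, ← mul_sum]
  ring

lemma fS_sub_fS (S : Finset (Fin n)) (y z : Fin n → ℝ) :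
    fS n q S y - fS n q S z = ∑ i ∈ S, (y i - z i) := by
  simp only [fS, sum_sub_distrib]
  ring

lemma fS_add_smul_sub (S : Finset (Fin n)) (y z : Fin n → ℝ) (t : ℝ) :
    fS n q S (y + t • (z - y)) = fS n q S y + t * (fS n q S z - fS n q S y) := by
  rw [fS_add_smul, fS_sub_fS]
  rfl

lemma fS_singleton (i : Fin n) (y : Fin n → ℝ) : fS n q {i} y = y i - q 1 := by
  simp only [fS, card_singleton, sum_singleton]
  ring

lemma Fmap_pos {y : Fin n → ℝ} (hy : y ∈ Omega n q) (i : Fin n) : 0 < Fmap n q y i :=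
  prod_pos fun S hS => hy S ⟨i, (mem_filter.1 hS).2⟩

lemma log_Fmap {y : Fin n → ℝ} (hy : y ∈ Omega n q) (i : Fin n) :
    Real.log (Fmap n q y i) = ∑ S ∈ univ.filter (i ∈ ·), Real.log (fS n q S y) :=
  Real.log_prod fun S hS => (hy S ⟨i, (mem_filter.1 hS).2⟩).ne'

lemma isOpen_Omega : IsOpen (Omega n q) := by
  have : Omega n q = ⋂ S ∈ univ.filter Finset.Nonempty, {y | 0 < fS n q S y} := by
    ext y
    simp [Omega]
  rw [this]
  exact isOpen_biInter_finset fun S _ => isOpen_lt continuous_const (continuous_fS S)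

lemma Omega_nonempty : (Omega n q).Nonempty := by
  set m : ℕ := (range (n + 1)).sup q
  refine ⟨fun _ => m + 1, fun S hS => ?_⟩
  have hcard : #S ≤ n := (card_le_univ S).trans (Fintype.card_fin n).le
  have hq : (q #S : ℝ) ≤ m := by exact_mod_cast le_sup (mem_range.2 (Nat.lt_succ_of_le hcard))
  have hS : (1 : ℝ) ≤ #S := by exact_mod_cast hS.card_pos
  simp only [fS, sum_const, nsmul_eq_mul]
  nlinarith

lemma injOn_Fmap_Omega : Set.InjOn (Fmap n q) (Omega n q) := by
  intro y hy z hz hF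
  by_contra hne
  obtain ⟨i, hi⟩ := Function.ne_iff.1 hne
  set D : Finset (Fin n) → ℝ := fun S =>
    (Real.log (fS n q S y) - Real.log (fS n q S z)) * (fS n q S y - fS n q S z)
  have hD_nonneg : ∀ S, 0 ≤ D S := by
    intro S
    rcases S.eq_empty_or_nonempty with rfl | hS
    · simp [D, fS]
    rcases eq_or_ne (fS n q S y) (fS n q S z) with h | h
    · simp [D, h]
    · exact (log_sub_log_mul_sub_pos (hy S hS) (hz S hS) h).le
  have hD_singleton : 0 < D {i} := by
    refine log_sub_log_mul_sub_pos (hy _ (singleton_nonempty i)) (hz _ (singleton_nonempty i)) ?_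
    rw [fS_singleton, fS_singleton]
    exact fun h => hi (by linarith)
  have hD_sum : ∑ S, D S = 0 := by
    simp only [D, fS_sub_fS]
    rw [← sum_sum_filter_mem_mul]
    simp only [sum_sub_distrib, ← log_Fmap hy, ← log_Fmap hz, hF, sub_self, zero_mul,
      sum_const_zero]
  exact (sum_pos' (fun S _ => hD_nonneg S) ⟨{i}, mem_univ _, hD_singleton⟩).ne' hD_sum

end

def OmegaBar (n : ℕ) (q : ℕ → ℕ) : Set (Fin n → ℝ) :=
  {y | ∀ S : Finset (Fin n), S.Nonempty → 0 ≤ fS n q S y}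

noncomputable def potential (n : ℕ) (q : ℕ → ℕ) (c y : Fin n → ℝ) : ℝ :=
  (∑ S ∈ univ.filter Finset.Nonempty, phi (fS n q S y)) - ∑ i, c i * y i

section
variable {n : ℕ} {q : ℕ → ℕ}

lemma Omega_subset_OmegaBar : Omega n q ⊆ OmegaBar n q := fun _ hy S hS => (hy S hS).le

lemma isClosed_OmegaBar : IsClosed (OmegaBar n q) := by
  have : OmegaBar n q = ⋂ S ∈ univ.filter Finset.Nonempty, {y | 0 ≤ fS n q S y} := by
    ext y
    simp [OmegaBar]
  rw [this]
  exact isClosed_biInter fun S _ => isClosed_le continuous_const (continuous_fS S)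

lemma nonneg_of_mem_OmegaBar {y : Fin n → ℝ} (hy : y ∈ OmegaBar n q) : 0 ≤ y := fun i => by
  have := hy {i} (singleton_nonempty i)
  rw [fS_singleton] at this
  exact (Nat.cast_nonneg (q 1)).trans (sub_nonneg.1 this)

lemma add_smul_sub_mem_OmegaBar {y z : Fin n → ℝ} (hy : y ∈ OmegaBar n q)
    (hz : z ∈ OmegaBar n q) {t : ℝ} (ht₀ : 0 ≤ t) (ht₁ : t ≤ 1) :
    y + t • (z - y) ∈ OmegaBar n q := fun S hS => by
  have hy := hy S hS
  have hz := hz S hS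
  rw [fS_add_smul_sub]
  nlinarith

variable (c : Fin n → ℝ)

lemma continuous_potential : Continuous (potential n q c) :=
  (continuous_finsetSum _ fun S _ => continuous_phi.comp (continuous_fS S)).sub
    (continuous_finsetSum _ fun i _ => continuous_const.mul (continuous_apply i))

lemma exists_lt_potential (M : ℝ) :
    ∃ R, ∀ y ∈ OmegaBar n q, ∀ j, R ≤ y j → M < potential n q c y := by
  set N : ℝ := ((univ.filter (Finset.Nonempty : Finset (Fin n) → Prop)).card : ℝ)
  set C : ℝ := ∑ i, |c i|
  obtain ⟨U, hU⟩ := eventually_atTop.1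
    ((tendsto_phi_sub_mul_atTop C).eventually_gt_atTop (M + N + C * q n))
  refine ⟨U + q n, fun y hy j hj => ?_⟩
  have hy₀ := nonneg_of_mem_OmegaBar hy
  set s := ∑ i, y i
  have hle_s : ∀ i, y i ≤ s := fun i => single_le_sum (fun i _ => hy₀ i) (mem_univ i)
  have hlin : ∑ i, c i * y i ≤ C * s := by
    rw [sum_mul]
    exact sum_le_sum fun i _ => (mul_le_mul_of_nonneg_right (le_abs_self _) (hy₀ i)).trans
      (mul_le_mul_of_nonneg_left (hle_s i) (abs_nonneg _))
  have huniv : fS n q univ y = s - q n := by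
    simp only [fS, card_univ, Fintype.card_fin, s]
    ring
  have hsum : phi (s - q n) + 1 - N ≤ ∑ S ∈ univ.filter Finset.Nonempty, phi (fS n q S y) := by
    have huniv_mem : univ ∈ univ.filter (Finset.Nonempty : Finset (Fin n) → Prop) :=
      mem_filter.2 ⟨mem_univ _, j, mem_univ j⟩
    have := single_le_sum (f := fun S => phi (fS n q S y) + 1)
      (fun S hS => by linarith [neg_one_le_phi (hy S (mem_filter.1 hS).2)]) huniv_mem
    rw [sum_add_distrib, sum_const, nsmul_one, huniv] at this
    linarith
  have := hU (s - q n) (by linarith [hle_s j])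
  rw [mul_sub] at this
  unfold potential
  linarith

lemma exists_isMinOn_potential :
    ∃ y ∈ OmegaBar n q, IsMinOn (potential n q c) (OmegaBar n q) y := by
  obtain ⟨y₀, hy₀⟩ := Omega_nonempty (n := n) (q := q)
  obtain ⟨R, hR⟩ := exists_lt_potential c (potential n q c y₀)
  refine (continuous_potential c).continuousOn.exists_isMinOn' isClosed_OmegaBar
    (Omega_subset_OmegaBar hy₀) (mem_inf_principal.2 (mem_cocompact.2
      ⟨Set.Icc 0 fun _ => R, isCompact_Icc, fun y hy hyK => ?_⟩))
  obtain ⟨j, hj⟩ : ∃ j, R < y j := by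
    by_contra! h
    exact hy ⟨nonneg_of_mem_OmegaBar hyK, h⟩
  exact (hR y hyK j hj.le).le

lemma potential_add_smul_sub_le {y z : Fin n → ℝ} (hy : y ∈ OmegaBar n q)
    (hz : z ∈ OmegaBar n q) {S₀ : Finset (Fin n)} (hS₀ : S₀.Nonempty) (h₀ : fS n q S₀ y = 0)
    {t : ℝ} (ht₀ : 0 ≤ t) (ht₁ : t ≤ 1) :
    potential n q c (y + t • (z - y)) ≤ potential n q c y
      + t * (potential n q c z - potential n q c y) + t * fS n q S₀ z * Real.log t := by
  have hterm : ∀ S ∈ univ.filter Finset.Nonempty, phi (fS n q S (y + t • (z - y))) ≤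
      phi (fS n q S y) + t * (phi (fS n q S z) - phi (fS n q S y))
        + if S = S₀ then t * fS n q S₀ z * Real.log t else 0 := by
    intro S hS
    rw [fS_add_smul_sub]
    split_ifs with h
    · subst h
      rw [h₀, zero_add, sub_zero, phi_mul]
      simp [phi]
    · have hS := (mem_filter.1 hS).2
      simpa only [add_zero] using phi_add_mul_sub_le (hy S hS) (hz S hS) ht₀ ht₁
  have hlin : ∑ i, c i * (y + t • (z - y)) i
      = ∑ i, c i * y i + t * (∑ i, c i * z i - ∑ i, c i * y i) := by
    simp only [Pi.add_apply, Pi.smul_apply, Pi.sub_apply, smul_eq_mul, mul_sum, ← sum_sub_distrib,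
      ← sum_add_distrib]
    exact sum_congr rfl fun i _ => by ring
  have hsum := sum_le_sum hterm
  rw [sum_add_distrib, sum_add_distrib, sum_ite_eq', if_pos (mem_filter.2 ⟨mem_univ _, hS₀⟩),
    ← mul_sum, sum_sub_distrib] at hsum
  unfold potential
  rw [hlin]
  linarith

lemma mem_Omega_of_isMinOn_potential {y : Fin n → ℝ} (hy : y ∈ OmegaBar n q)
    (hmin : IsMinOn (potential n q c) (OmegaBar n q) y) : y ∈ Omega n q := by
  intro S₀ hS₀
  by_contra h
  have h₀ : fS n q S₀ y = 0 := le_antisymm (not_lt.1 h) (hy S₀ hS₀)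
  obtain ⟨z, hz⟩ := Omega_nonempty (n := n) (q := q)
  set D := potential n q c z - potential n q c y
  set b := fS n q S₀ z
  have hb : 0 < b := hz S₀ hS₀
  have hD : 0 ≤ D := sub_nonneg.2 (hmin (Omega_subset_OmegaBar hz))
  -- with this `t`, the bound of `potential_add_smul_sub_le` is `potential y - t`
  set t := Real.exp (-(D + 1) / b)
  have ht₀ : 0 < t := Real.exp_pos _
  have ht₁ : t ≤ 1 := Real.exp_le_one_iff.2 (div_nonpos_of_nonpos_of_nonneg (by linarith) hb.le)
  have hlog : b * Real.log t = -(D + 1) := by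
    rw [Real.log_exp]
    field_simp
  have hseg := potential_add_smul_sub_le c hy (Omega_subset_OmegaBar hz) hS₀ h₀ ht₀.le ht₁
  have hmin_t : potential n q c y ≤ potential n q c (y + t • (z - y)) :=
    hmin (add_smul_sub_mem_OmegaBar hy (Omega_subset_OmegaBar hz) ht₀.le ht₁)
  have : t * b * Real.log t = -(t * (D + 1)) := by
    rw [mul_assoc, hlog]
    ring
  linarith

lemma hasDerivAt_potential_add_smul {y : Fin n → ℝ} (hy : y ∈ Omega n q) (v : Fin n → ℝ) :
    HasDerivAt (fun t : ℝ => potential n q c (y + t • v))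
      ((∑ S ∈ univ.filter Finset.Nonempty, Real.log (fS n q S y) * ∑ i ∈ S, v i)
        - ∑ i, c i * v i) 0 := by
  have hlin : ∀ t : ℝ, ∑ i, c i * (y + t • v) i = ∑ i, c i * y i + t * ∑ i, c i * v i := by
    intro t
    simp only [Pi.add_apply, Pi.smul_apply, smul_eq_mul, mul_add, sum_add_distrib, mul_sum]
    exact congrArg _ (sum_congr rfl fun i _ => by ring)
  simp only [potential, fS_add_smul, hlin]
  refine (HasDerivAt.fun_sum fun S hS => ?_).sub ?_
  · have hphi := hasDerivAt_phi (hy S (mem_filter.1 hS).2).ne'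
    have hlin' : HasDerivAt (fun t : ℝ => fS n q S y + t * ∑ i ∈ S, v i) (∑ i ∈ S, v i) 0 := by
      simpa using ((hasDerivAt_id (0 : ℝ)).mul_const (∑ i ∈ S, v i)).const_add (fS n q S y)
    exact hphi.comp_of_eq 0 hlin' (by simp)
  · simpa using ((hasDerivAt_id (0 : ℝ)).mul_const (∑ i, c i * v i)).const_add (∑ i, c i * y i)

lemma log_Fmap_eq_of_isMinOn_potential {y : Fin n → ℝ} (hy : y ∈ Omega n q)
    (hmin : IsMinOn (potential n q c) (OmegaBar n q) y) (i : Fin n) :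
    Real.log (Fmap n q y i) = c i := by
  set line : ℝ → Fin n → ℝ := fun t => y + t • Pi.single i 1
  have hline₀ : line 0 = y := by simp [line]
  have hline : Tendsto line (𝓝 0) (𝓝 y) := by
    have : Continuous line := by fun_prop
    exact this.tendsto' 0 y hline₀
  have hloc : IsLocalMin (potential n q c ∘ line) 0 := by
    refine IsMinFilter.comp_tendsto (?_ : IsMinFilter _ (𝓝 y) (line 0)) hline
    rw [hline₀]
    exact hmin.isLocalMin (mem_of_superset (isOpen_Omega.mem_nhds hy) Omega_subset_OmegaBar)
  have h := hloc.hasDerivAt_eq_zero (hasDerivAt_potential_add_smul c hy _)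
  have hfilter : univ.filter (fun S : Finset (Fin n) => S.Nonempty ∧ i ∈ S) = univ.filter (i ∈ ·) :=
    filter_congr fun S _ => ⟨And.right, fun h => ⟨⟨i, h⟩, h⟩⟩
  simp only [sum_pi_single', mul_ite, mul_one, mul_zero, ← sum_filter, filter_filter, hfilter] at h
  rw [log_Fmap hy]
  simpa [Pi.single_apply, sub_eq_zero] using h

lemma exists_mem_Omega_Fmap_eq {x : Fin n → ℝ} (hx : ∀ i, 0 < x i) :
    ∃ y ∈ Omega n q, Fmap n q y = x := by
  set c : Fin n → ℝ := fun i => Real.log (x i)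
  obtain ⟨y, hy, hmin⟩ := exists_isMinOn_potential (q := q) c
  have hyΩ := mem_Omega_of_isMinOn_potential c hy hmin
  refine ⟨y, hyΩ, funext fun i => ?_⟩
  rw [← Real.exp_log (Fmap_pos hyΩ i), log_Fmap_eq_of_isMinOn_potential c hyΩ hmin i,
    Real.exp_log (hx i)]

end

theorem Fmap_bijection_Omega'_onto_simplex_general
    (n : ℕ) (q : ℕ → ℕ) :
    Set.BijOn (Fmap n q) (Omega' n q) (simplex' n) ∧
    Fmap n q ⁻¹' (simplex' n) ∩ Omega n q = Omega' n q := by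
  have hpreimage : Fmap n q ⁻¹' (simplex' n) ∩ Omega n q = Omega' n q := by
    ext y
    exact ⟨fun ⟨hF, hy⟩ => ⟨hy, hF.2⟩, fun ⟨hy, hF⟩ => ⟨⟨Fmap_pos hy, hF⟩, hy⟩⟩
  refine ⟨⟨?_, injOn_Fmap_Omega.mono Set.inter_subset_left, ?_⟩, hpreimage⟩
  · rw [← hpreimage]
    exact fun y hy => hy.1
  · intro x hx
    obtain ⟨y, hy, rfl⟩ := exists_mem_Omega_Fmap_eq (q := q) hx.1
    exact ⟨y, hpreimage ▸ ⟨hx, hy⟩, rfl⟩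

theorem Fmap_bijection_Omega'_onto_simplex
    (n : ℕ) (hn : 1 ≤ n) (q : ℕ → ℕ) (hq : qCond q) :
    Set.BijOn (Fmap n q) (Omega' n q) (simplex' n) ∧
    Fmap n q ⁻¹' (simplex' n) ∩ Omega n q = Omega' n q :=
  Fmap_bijection_Omega'_onto_simplex_general n q
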